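/- arXiv:1303.5916 — 2 statements merged into one kernel-verified Lean document; each statement's English description precedes it below -/
import Mathlib

section
/- Let v_2 be the vector field on P^9 given by v_2 = Z_2(∂/∂Z_0 − ∂/∂Z_7) + 3Z_4(∂/∂Z_1 − ∂/∂Z_6) + 3Z_5·∂/∂Z_2 − 5Z_1·∂/∂Z_3 + 2Z_0(∂/∂Z_4 − ∂/∂Z_9) − Z_3·∂/∂Z_8. Then v_2 annihilates each of the quadrics p_1,...,p_5 defining G(2,5) modulo the ideal generated by p_1,...,p_5 and λ_1 = Z_0+Z_7, λ_2 = Z_4+Z_9, λ_3 = Z_1+Z_6, and v_2(λ_k) lies in the ideal (λ_1, λ_2, λ_3) for k = 1,2,3. -/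
open MvPolynomial

/-- The vector field
`v₂ = Z₂(∂₀ − ∂₇) + 3Z₄(∂₁ − ∂₆) + 3Z₅∂₂ − 5Z₁∂₃ + 2Z₀(∂₄ − ∂₉) − Z₃∂₈`
is tangent to the del Pezzo quintic threefold: it sends each Plücker quadric `pⱼ`
into the ideal `(p₁,…,p₅,λ₁,λ₂,λ₃)` and each linear form `λₖ` into `(λ₁,λ₂,λ₃)`. -/
theorem stmt_15 (k : Type*) [Field k] [CharZero k]
    (D : MvPolynomial (Fin 10) k → MvPolynomial (Fin 10) k)
    (hD : ∀ p, D p = X 2 * (pderiv 0 p - pderiv 7 p) + 3 * X 4 * (pderiv 1 p - pderiv 6 p)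
      + 3 * X 5 * pderiv 2 p - 5 * X 1 * pderiv 3 p + 2 * X 0 * (pderiv 4 p - pderiv 9 p)
      - X 3 * pderiv 8 p)
    (p : Fin 5 → MvPolynomial (Fin 10) k)
    (hp1 : p 0 = X 0 * X 7 - X 1 * X 5 + X 2 * X 4)
    (hp2 : p 1 = X 0 * X 8 - X 1 * X 6 + X 3 * X 4)
    (hp3 : p 2 = X 0 * X 9 - X 2 * X 6 + X 3 * X 5)
    (hp4 : p 3 = X 1 * X 9 - X 2 * X 8 + X 3 * X 7)
    (hp5 : p 4 = X 4 * X 9 - X 8 * X 5 + X 6 * X 7)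
    (l : Fin 3 → MvPolynomial (Fin 10) k)
    (hl1 : l 0 = X 0 + X 7) (hl2 : l 1 = X 4 + X 9) (hl3 : l 2 = X 1 + X 6) :
    (∀ j, D (p j) ∈ Ideal.span ({p 0, p 1, p 2, p 3, p 4, l 0, l 1, l 2} :
        Set (MvPolynomial (Fin 10) k))) ∧
    (∀ i, D (l i) ∈ Ideal.span ({l 0, l 1, l 2} : Set (MvPolynomial (Fin 10) k))) := by

  have mem : ∀ g ∈ ({p 0, p 1, p 2, p 3, p 4, l 0, l 1, l 2} :
      Set (MvPolynomial (Fin 10) k)), g ∈ Ideal.span ({p 0, p 1, p 2, p 3, p 4, l 0, l 1, l 2} :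
      Set (MvPolynomial (Fin 10) k)) := fun g hg => Ideal.subset_span hg
  constructor
  · intro j
    fin_cases j
    · show D (p 0) ∈ _
      have e : D (p 0) = X 2 * l 0 := by
        rw [hD, hp1, hl1]; simp [pderiv_mul, pderiv_X]; ring
      rw [e]
      exact Ideal.mul_mem_left _ _ (mem _ (by simp))
    · show D (p 1) ∈ _
      have e : D (p 1) = (-1) * p 3 + X 3 * l 0 + X 1 * l 1 + (-(3 * X 4)) * l 2 := by
        rw [hD, hp2, hp4, hl1, hl2, hl3]; simp [pderiv_mul, pderiv_X]; ring
      rw [e]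
      refine Ideal.add_mem _ (Ideal.add_mem _ (Ideal.add_mem _ ?_ ?_) ?_) ?_ <;>
        exact Ideal.mul_mem_left _ _ (mem _ (by simp))
    · show D (p 2) ∈ _
      have e : D (p 2) = 2 * p 0 + (-(2 * X 0)) * l 0 + X 2 * l 1 + (-(3 * X 5)) * l 2 := by
        rw [hD, hp3, hp1, hl1, hl2, hl3]; simp [pderiv_mul, pderiv_X]; ring
      rw [e]
      refine Ideal.add_mem _ (Ideal.add_mem _ (Ideal.add_mem _ ?_ ?_) ?_) ?_ <;>
        exact Ideal.mul_mem_left _ _ (mem _ (by simp))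
    · show D (p 3) ∈ _
      have e : D (p 3) = 3 * p 4 + (-(5 * X 1) - 3 * X 6) * l 0 + (3 * X 0) * l 2 := by
        rw [hD, hp4, hp5, hl1, hl3]; simp [pderiv_mul, pderiv_X]; ring
      rw [e]
      refine Ideal.add_mem _ (Ideal.add_mem _ ?_ ?_) ?_ <;>
        exact Ideal.mul_mem_left _ _ (mem _ (by simp))
    · show D (p 4) ∈ _
      have e : D (p 4) = 1 * p 2 + (-(3 * X 4)) * l 0 + X 0 * l 1 := by
        rw [hD, hp5, hp3, hl1, hl2]; simp [pderiv_mul, pderiv_X]; ring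
      rw [e]
      refine Ideal.add_mem _ (Ideal.add_mem _ ?_ ?_) ?_ <;>
        exact Ideal.mul_mem_left _ _ (mem _ (by simp))
  · intro i
    fin_cases i
    · show D (l 0) ∈ _
      have e : D (l 0) = 0 := by rw [hD, hl1]; simp [pderiv_X]
      rw [e]; exact Ideal.zero_mem _
    · show D (l 1) ∈ _
      have e : D (l 1) = 0 := by rw [hD, hl2]; simp [pderiv_X]
      rw [e]; exact Ideal.zero_mem _
    · show D (l 2) ∈ _
      have e : D (l 2) = 0 := by rw [hD, hl3]; simp [pderiv_X]
      rw [e]; exact Ideal.zero_mem _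
end

section
/- Let v_1 be the derivation of k[Z_0,...,Z_9] given by v_1 = 2Z_1(∂/∂Z_1 − ∂/∂Z_6) − Z_2∂/∂Z_2 + 3Z_3∂/∂Z_3 + Z_4(∂/∂Z_4 − ∂/∂Z_9) − 2Z_5∂/∂Z_5 + 4Z_8∂/∂Z_8. Then v_1(p_j) lies in the ideal generated by p_1,...,p_5 and Z_0+Z_7, Z_4+Z_9, Z_1+Z_6 for each j = 1,...,5, and v_1(Z_0+Z_7), v_1(Z_4+Z_9), v_1(Z_1+Z_6) lie in the ideal (Z_0+Z_7, Z_4+Z_9, Z_1+Z_6). -/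
open MvPolynomial

/-- The vector field
`v₁ = 2Z₁(∂₁ − ∂₆) − Z₂∂₂ + 3Z₃∂₃ + Z₄(∂₄ − ∂₉) − 2Z₅∂₅ + 4Z₈∂₈`
is tangent to the del Pezzo quintic threefold: it sends each Plücker quadric `pⱼ`
into the ideal `(p₁,…,p₅,λ₁,λ₂,λ₃)` and each linear form `λₖ` into `(λ₁,λ₂,λ₃)`. -/
theorem stmt_16 (k : Type*) [Field k] [CharZero k]
    (D : MvPolynomial (Fin 10) k → MvPolynomial (Fin 10) k)
    (hD : ∀ p, D p = 2 * X 1 * (pderiv 1 p - pderiv 6 p) - X 2 * pderiv 2 p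
      + 3 * X 3 * pderiv 3 p + X 4 * (pderiv 4 p - pderiv 9 p) - 2 * X 5 * pderiv 5 p
      + 4 * X 8 * pderiv 8 p)
    (p : Fin 5 → MvPolynomial (Fin 10) k)
    (hp1 : p 0 = X 0 * X 7 - X 1 * X 5 + X 2 * X 4)
    (hp2 : p 1 = X 0 * X 8 - X 1 * X 6 + X 3 * X 4)
    (hp3 : p 2 = X 0 * X 9 - X 2 * X 6 + X 3 * X 5)
    (hp4 : p 3 = X 1 * X 9 - X 2 * X 8 + X 3 * X 7)
    (hp5 : p 4 = X 4 * X 9 - X 8 * X 5 + X 6 * X 7)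
    (l : Fin 3 → MvPolynomial (Fin 10) k)
    (hl1 : l 0 = X 0 + X 7) (hl2 : l 1 = X 4 + X 9) (hl3 : l 2 = X 1 + X 6) :
    (∀ j, D (p j) ∈ Ideal.span ({p 0, p 1, p 2, p 3, p 4, l 0, l 1, l 2} :
        Set (MvPolynomial (Fin 10) k))) ∧
    (∀ i, D (l i) ∈ Ideal.span ({l 0, l 1, l 2} : Set (MvPolynomial (Fin 10) k))) := by
  have mem : ∀ (q : MvPolynomial (Fin 10) k),
      q ∈ ({p 0, p 1, p 2, p 3, p 4, l 0, l 1, l 2} : Set (MvPolynomial (Fin 10) k)) →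
      q ∈ Ideal.span ({p 0, p 1, p 2, p 3, p 4, l 0, l 1, l 2} :
        Set (MvPolynomial (Fin 10) k)) := fun q hq => Ideal.subset_span hq
  constructor
  · intro j
    fin_cases j
    · show D (p 0) ∈ _
      have h : D (p 0) = 0 := by
        rw [hD, hp1]
        simp [pderiv_mul, pderiv_X, Pi.single_apply]
        ring
      rw [h]; exact Ideal.zero_mem _
    · show D (p 1) ∈ _
      have h : D (p 1) = 4 * p 1 + 2 * X 1 * l 2 := by
        rw [hD, hp2, hl3]
        simp [pderiv_mul, pderiv_X, Pi.single_apply]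
        ring
      rw [h]
      exact add_mem (Ideal.mul_mem_left _ _ (mem _ (by simp)))
        (Ideal.mul_mem_left _ _ (mem _ (by simp)))
    · show D (p 2) ∈ _
      have h : D (p 2) = p 2 + 2 * X 2 * l 2 - X 0 * l 1 := by
        rw [hD, hp3, hl3, hl2]
        simp [pderiv_mul, pderiv_X, Pi.single_apply]
        ring
      rw [h]
      exact sub_mem (add_mem (mem _ (by simp)) (Ideal.mul_mem_left _ _ (mem _ (by simp))))
        (Ideal.mul_mem_left _ _ (mem _ (by simp)))
    · show D (p 3) ∈ _
      have h : D (p 3) = 3 * p 3 - X 1 * l 1 := by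
        rw [hD, hp4, hl2]
        simp [pderiv_mul, pderiv_X, Pi.single_apply]
        ring
      rw [h]
      exact sub_mem (Ideal.mul_mem_left _ _ (mem _ (by simp)))
        (Ideal.mul_mem_left _ _ (mem _ (by simp)))
    · show D (p 4) ∈ _
      have h : D (p 4) = 2 * p 4 - X 4 * l 1 - 2 * X 7 * l 2 := by
        rw [hD, hp5, hl2, hl3]
        simp [pderiv_mul, pderiv_X, Pi.single_apply]
        ring
      rw [h]
      exact sub_mem (sub_mem (Ideal.mul_mem_left _ _ (mem _ (by simp)))
        (Ideal.mul_mem_left _ _ (mem _ (by simp))))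
        (Ideal.mul_mem_left _ _ (mem _ (by simp)))
  · intro i
    fin_cases i
    · show D (l 0) ∈ _
      have h : D (l 0) = 0 := by
        rw [hD, hl1]; simp [pderiv_X, Pi.single_apply]
      rw [h]; exact Ideal.zero_mem _
    · show D (l 1) ∈ _
      have h : D (l 1) = 0 := by
        rw [hD, hl2]; simp [pderiv_X, Pi.single_apply]
      rw [h]; exact Ideal.zero_mem _
    · show D (l 2) ∈ _
      have h : D (l 2) = 0 := by
        rw [hD, hl3]; simp [pderiv_X, Pi.single_apply]
      rw [h]; exact Ideal.zero_mem _
end
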